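/- Let T > 0 and let u : ℝ × [0,T) → ℝ be a classical periodic solution of the Fornberg–Whitham equation such that, in addition, ∂_x² u and ∂_t ∂_x u exist and are continuous on ℝ × [0,T). Set m₁(t) := min_{x∈[0,1]} ∂_x u(x,t) and m₂(t) := max_{x∈[0,1]} ∂_x u(x,t). Then m₁ and m₂ are locally Lipschitz on [0,T), and for almost every t ∈ (0,T) they are differentiable at t with m₁'(t) ≤ -(3/2) m₁(t)² + (m₂(t) - m₁(t))/2 and m₂'(t) ≤ -(3/2) m₂(t)² + (m₂(t) - m₁(t))/2. -/

import Mathlib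

/-!
The extremal slopes are envelopes of the family `t ↦ ∂ₓu(x,t)`, which is uniformly Lipschitz on
`[0,b]` because `∂ₜ∂ₓu` is bounded there; hence `m₁`, `m₂` are Lipschitz, and by Rademacher's
theorem differentiable almost everywhere. At such a time `t`, if the minimum is attained at `ξ`,
then `∂ₓu(ξ,·) - m₁` has a local minimum at `t`, so `m₁'(t) = ∂ₜ∂ₓu(ξ,t)`, while `∂ₓ²u(ξ,t) = 0`.
Differentiating the equation in `x` (the mixed partials commute) and integrating the convolution
by parts gives `∂ₜ∂ₓu = -(3/2)(∂ₓu)² - (3/2) u ∂ₓ²u + ∫₀¹ K'(y) ∂ₓu(x-y,t) dy`. As `K' ≤ 0` on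
`[0,1/2]`, `K' ≥ 0` on `[1/2,1]`, `K(0) = K(1)` and `K(1) - K(1/2) ≤ 1/2`, that integral is at most
`(m₂ - m₁)/2`. The maximum is handled in the same way.
-/

open MeasureTheory

/-- The 1-periodic convolution kernel of `(id - ∂ₓ²)⁻¹` on the circle, on `[0,1)`. -/
noncomputable def FWKernel (y : ℝ) : ℝ :=
  (Real.exp y + Real.exp (1 - y)) / (2 * (Real.exp 1 - 1))

/-- A classical periodic solution of the Fornberg–Whitham equation on `ℝ × [0,T)`:
`u` is 1-periodic in `x`, has continuous partial derivatives `ux = ∂ₓ u` and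
`ut = ∂ₜ u` on `ℝ × [0,T)`, and satisfies
`∂ₜ u + (3/2) u ∂ₓ u = ∫_0^1 K(y) ∂ₓ u(x - y, t) dy`. -/
def IsClassicalFWSolution (T : ℝ) (u ux ut : ℝ → ℝ → ℝ) : Prop :=
  ContinuousOn (fun p : ℝ × ℝ => u p.1 p.2) (Set.univ ×ˢ Set.Ico 0 T) ∧
  (∀ x : ℝ, ∀ t ∈ Set.Ico (0 : ℝ) T, u (x + 1) t = u x t) ∧
  (∀ x : ℝ, ∀ t ∈ Set.Ico (0 : ℝ) T, HasDerivAt (fun x' => u x' t) (ux x t) x) ∧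
  (∀ x : ℝ, ∀ t ∈ Set.Ico (0 : ℝ) T,
    HasDerivWithinAt (fun t' => u x t') (ut x t) (Set.Ico 0 T) t) ∧
  ContinuousOn (fun p : ℝ × ℝ => ux p.1 p.2) (Set.univ ×ˢ Set.Ico 0 T) ∧
  ContinuousOn (fun p : ℝ × ℝ => ut p.1 p.2) (Set.univ ×ˢ Set.Ico 0 T) ∧
  (∀ x : ℝ, ∀ t ∈ Set.Ico (0 : ℝ) T,
    ut x t + (3 / 2) * u x t * ux x t = ∫ y in (0:ℝ)..1, FWKernel y * ux (x - y) t)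

open Set Filter Function Topology

noncomputable def FWKernelDeriv (y : ℝ) : ℝ :=
  (Real.exp y - Real.exp (1 - y)) / (2 * (Real.exp 1 - 1))

theorem FWKernel_denom_pos : 0 < 2 * (Real.exp 1 - 1) := by
  linarith [Real.add_one_lt_exp one_ne_zero]

theorem hasDerivAt_FWKernel (y : ℝ) : HasDerivAt FWKernel (FWKernelDeriv y) y := by
  have h := ((hasDerivAt_id y).exp.add ((hasDerivAt_id y).const_sub 1).exp).div_const
    (2 * (Real.exp 1 - 1))
  simp only [id, mul_one, mul_neg, ← sub_eq_add_neg] at h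
  exact h

theorem continuous_FWKernel : Continuous FWKernel := by
  unfold FWKernel; fun_prop

theorem continuous_FWKernelDeriv : Continuous FWKernelDeriv := by
  unfold FWKernelDeriv; fun_prop

theorem FWKernelDeriv_nonpos {y : ℝ} (hy : y ≤ 1 / 2) : FWKernelDeriv y ≤ 0 :=
  div_nonpos_of_nonpos_of_nonneg
    (sub_nonpos.2 (Real.exp_le_exp.2 (by linarith))) FWKernel_denom_pos.le

theorem FWKernelDeriv_nonneg {y : ℝ} (hy : 1 / 2 ≤ y) : 0 ≤ FWKernelDeriv y :=
  div_nonneg (sub_nonneg.2 (Real.exp_le_exp.2 (by linarith))) FWKernel_denom_pos.le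

theorem FWKernel_zero_eq_one : FWKernel 0 = FWKernel 1 := by
  simp only [FWKernel, sub_zero, sub_self, add_comm]

/-- `K 1 - K (1/2) = (√e - 1)² / (2 (e - 1)) = (√e - 1) / (2 (√e + 1))`. -/
theorem FWKernel_one_sub_half_mem : FWKernel 1 - FWKernel (1 / 2) ∈ Icc (0 : ℝ) (1 / 2) := by
  have hsq : Real.exp (1 / 2) * Real.exp (1 / 2) = Real.exp 1 := by
    rw [← Real.exp_add]; norm_num
  have h1 : 1 ≤ Real.exp (1 / 2) := Real.one_le_exp (by norm_num)
  have hhalf : Real.exp (1 - 1 / 2) = Real.exp (1 / 2) := by norm_num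
  rw [FWKernel, FWKernel, div_sub_div_same, sub_self, Real.exp_zero, hhalf]
  constructor
  · exact div_nonneg (by nlinarith) FWKernel_denom_pos.le
  · rw [div_le_iff₀ FWKernel_denom_pos]
    nlinarith

theorem intervalIntegral_deriv_mul_le {k k' v : ℝ → ℝ} {a b c lo hi : ℝ} (hac : a ≤ c)
    (hcb : c ≤ b) (hk : ∀ y, HasDerivAt k (k' y) y) (hk' : Continuous k') (hv : Continuous v)
    (hk'_nonpos : ∀ y ∈ Icc a c, k' y ≤ 0) (hk'_nonneg : ∀ y ∈ Icc c b, 0 ≤ k' y)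
    (hlo : ∀ y, lo ≤ v y) (hhi : ∀ y, v y ≤ hi) :
    ∫ y in a..b, k' y * v y ≤ (k c - k a) * lo + (k b - k c) * hi := by
  have hint : ∀ p q, IntervalIntegrable (fun y => k' y * v y) volume p q :=
    fun p q => (hk'.mul hv).intervalIntegrable p q
  have hFTC : ∀ p q, ∫ y in p..q, k' y = k q - k p := fun p q =>
    intervalIntegral.integral_eq_sub_of_hasDerivAt (fun y _ => hk y) (hk'.intervalIntegrable p q)
  have hleft : ∫ y in a..c, k' y * v y ≤ (k c - k a) * lo := by
    rw [← hFTC, ← intervalIntegral.integral_mul_const]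
    exact intervalIntegral.integral_mono_on hac (hint a c)
      ((hk'.mul continuous_const).intervalIntegrable a c)
      fun y hy => mul_le_mul_of_nonpos_left (hlo y) (hk'_nonpos y hy)
  have hright : ∫ y in c..b, k' y * v y ≤ (k b - k c) * hi := by
    rw [← hFTC, ← intervalIntegral.integral_mul_const]
    exact intervalIntegral.integral_mono_on hcb (hint c b)
      ((hk'.mul continuous_const).intervalIntegrable c b)
      fun y hy => mul_le_mul_of_nonneg_left (hhi y) (hk'_nonneg y hy)
  rw [← intervalIntegral.integral_add_adjacent_intervals (hint a c) (hint c b)]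
  exact add_le_add hleft hright

theorem integral_FWKernelDeriv_mul_le {v : ℝ → ℝ} (hv : Continuous v) {lo hi : ℝ}
    (hlo : ∀ y, lo ≤ v y) (hhi : ∀ y, v y ≤ hi) :
    ∫ y in (0 : ℝ)..1, FWKernelDeriv y * v y ≤ (hi - lo) / 2 := by
  have hbound := intervalIntegral_deriv_mul_le (a := 0) (b := 1) (c := 1 / 2) (by norm_num)
    (by norm_num) hasDerivAt_FWKernel continuous_FWKernelDeriv hv
    (fun y hy => FWKernelDeriv_nonpos hy.2) (fun y hy => FWKernelDeriv_nonneg hy.1) hlo hhi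
  obtain ⟨hc₀, hc₁⟩ := FWKernel_one_sub_half_mem
  have hlohi : 0 ≤ hi - lo := by linarith [hlo 0, hhi 0]
  rw [FWKernel_zero_eq_one] at hbound
  nlinarith

theorem hasDerivAt_intervalIntegral_of_continuous_partial {F F' : ℝ → ℝ → ℝ} {a b x₀ : ℝ}
    (hF : ∀ x, Continuous (F x)) (hF' : Continuous (uncurry F'))
    (hdiff : ∀ x y, HasDerivAt (F · y) (F' x y) x) :
    HasDerivAt (fun x => ∫ y in a..b, F x y) (∫ y in a..b, F' x₀ y) x₀ := by
  obtain ⟨C, hC⟩ := ((isCompact_closedBall x₀ 1).prod isCompact_uIcc).exists_bound_of_continuousOn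
    hF'.continuousOn
  refine (intervalIntegral.hasDerivAt_integral_of_dominated_loc_of_deriv_le
    (bound := fun _ => C) (Metric.closedBall_mem_nhds x₀ one_pos)
    (Eventually.of_forall fun x => (hF x).aestronglyMeasurable) ((hF x₀).intervalIntegrable a b)
    (hF'.comp (Continuous.prodMk_right x₀)).aestronglyMeasurable ?_ intervalIntegrable_const
    (ae_of_all _ fun y _ x _ => hdiff x y)).2
  exact ae_of_all _ fun y hy x hx => hC (x, y) ⟨hx, uIoc_subset_uIcc hy⟩

theorem intervalIntegral_mul_deriv_comp_sub_of_periodic {k k' g g' : ℝ → ℝ} {c : ℝ}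
    (hk : ∀ y, HasDerivAt k (k' y) y) (hk' : Continuous k') (hg : ∀ x, HasDerivAt g (g' x) x)
    (hg' : Continuous g') (hper : Periodic g c) (hkc : k 0 = k c) (x : ℝ) :
    ∫ y in (0 : ℝ)..c, k y * g' (x - y) = ∫ y in (0 : ℝ)..c, k' y * g (x - y) := by
  have hparts := intervalIntegral.integral_mul_deriv_eq_deriv_mul
    (fun y _ => hk y) (fun y _ => (hg (x - y)).comp_const_sub x y) (hk'.intervalIntegrable 0 c)
    ((hg'.comp (continuous_const.sub continuous_id)).neg.intervalIntegrable 0 c)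
  simp only [mul_neg, intervalIntegral.integral_neg, sub_zero, hper.sub_eq, hkc] at hparts
  linarith

theorem abs_rectangle_increment_sub_le {f fx ftx : ℝ → ℝ → ℝ} {ξ t r C ε : ℝ}
    (hfx : ∀ x ∈ Metric.ball ξ r, ∀ s ∈ Metric.ball t r, HasDerivAt (f · s) (fx x s) x)
    (hftx : ∀ x ∈ Metric.ball ξ r, ∀ s ∈ Metric.ball t r, HasDerivAt (fx x) (ftx x s) s)
    (hC : ∀ x ∈ Metric.ball ξ r, ∀ s ∈ Metric.ball t r, |ftx x s - C| ≤ ε)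
    {x s : ℝ} (hx : x ∈ Metric.ball ξ r) (hs : s ∈ Metric.ball t r) :
    |f x s - f ξ s - (f x t - f ξ t) - C * (x - ξ) * (s - t)| ≤ ε * |x - ξ| * |s - t| := by
  have ht : t ∈ Metric.ball t r := Metric.mem_ball_self (Metric.pos_of_mem_ball hs)
  have hξ : ξ ∈ Metric.ball ξ r := Metric.mem_ball_self (Metric.pos_of_mem_ball hx)
  have htime : ∀ z ∈ Metric.ball ξ r, |fx z s - fx z t - C * (s - t)| ≤ ε * |s - t| := by
    intro z hz
    have := (convex_ball t r).norm_image_sub_le_of_norm_hasDerivWithin_le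
      (f := fun σ => fx z σ - C * σ)
      (fun σ hσ => (((hftx z hz σ hσ).sub ((hasDerivAt_id σ).const_mul C))).hasDerivWithinAt)
      (fun σ hσ => by simpa using hC z hz σ hσ) ht hs
    simp only [Real.norm_eq_abs] at this
    convert this using 2; ring
  have := (convex_ball ξ r).norm_image_sub_le_of_norm_hasDerivWithin_le
    (f := fun z => f z s - f z t - C * (s - t) * z)
    (fun z hz => (((hfx z hz s hs).sub (hfx z hz t ht)).sub
      ((hasDerivAt_id z).const_mul (C * (s - t)))).hasDerivWithinAt)
    (fun z hz => by simpa using htime z hz) hξ hx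
  simp only [Real.norm_eq_abs] at this
  convert this using 1
  · congr 1; ring
  · ring

theorem eq_mixed_partial_of_continuousAt {f fx ftx : ℝ → ℝ → ℝ} {ft : ℝ → ℝ} {ξ t A : ℝ}
    (hfx : ∀ᶠ p in 𝓝 (ξ, t), HasDerivAt (f · p.2) (fx p.1 p.2) p.1)
    (hftx : ∀ᶠ p in 𝓝 (ξ, t), HasDerivAt (fx p.1) (ftx p.1 p.2) p.2)
    (hcont : ContinuousAt (fun p : ℝ × ℝ => ftx p.1 p.2) (ξ, t))
    (hft : ∀ x, HasDerivAt (f x) (ft x) t) (hA : HasDerivAt ft A ξ) :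
    A = ftx ξ t := by
  refine eq_of_forall_dist_le fun ε hε => ?_
  set C := ftx ξ t
  have hclose : ∀ᶠ p in 𝓝 (ξ, t), |ftx p.1 p.2 - C| ≤ ε :=
    hcont.eventually (Metric.closedBall_mem_nhds C hε)
  obtain ⟨r, hr, hball⟩ := Metric.eventually_nhds_iff_ball.1 (hfx.and (hftx.and hclose))
  have hmem : ∀ {x s}, x ∈ Metric.ball ξ r → s ∈ Metric.ball t r → (x, s) ∈ Metric.ball (ξ, t) r :=
    fun hx hs => by rw [← ball_prod_same]; exact ⟨hx, hs⟩
  have hrect := fun {x s} (hx : x ∈ Metric.ball ξ r) (hs : s ∈ Metric.ball t r) =>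
    abs_rectangle_increment_sub_le (fun x hx s hs => (hball _ (hmem hx hs)).1)
      (fun x hx s hs => (hball _ (hmem hx hs)).2.1) (fun x hx s hs => (hball _ (hmem hx hs)).2.2)
      hx hs
  -- first let `s → t` in the rectangle estimate, then `x → ξ`
  have hdiff : ∀ x ∈ Metric.ball ξ r, |ft x - ft ξ - C * (x - ξ)| ≤ ε * |x - ξ| := by
    intro x hx
    have hG := ((hft x).sub (hft ξ)).sub ((hasDerivAt_id t).const_mul (C * (x - ξ)))
    refine (hG.le_of_lip' (by positivity) ?_).trans_eq' (by simp)
    filter_upwards [Metric.ball_mem_nhds t hr] with s hs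
    simp only [Real.norm_eq_abs, Pi.sub_apply, id]
    convert hrect hx hs using 2; ring
  have hφ := hA.sub ((hasDerivAt_id ξ).const_mul C)
  refine (hφ.le_of_lip' hε.le ?_).trans_eq' (by simp [Real.dist_eq])
  filter_upwards [Metric.ball_mem_nhds ξ hr] with x hx
  simp only [Real.norm_eq_abs, Pi.sub_apply, id]
  convert hdiff x hx using 2; ring

theorem LipschitzOnWith.sInf_image {ι α : Type*} [PseudoMetricSpace α] {F : ι → α → ℝ}
    {I : Set ι} {S : Set α} {L : NNReal} (hI : I.Nonempty)
    (hbdd : ∀ t ∈ S, BddBelow ((F · t) '' I)) (hF : ∀ i ∈ I, LipschitzOnWith L (F i) S) :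
    LipschitzOnWith L (fun t => sInf ((F · t) '' I)) S := by
  refine LipschitzOnWith.of_le_add_mul L fun s hs t ht => ?_
  rw [← sub_le_iff_le_add]
  refine le_csInf (hI.image _) ?_
  rintro _ ⟨i, hi, rfl⟩
  have := (hF i hi).le_add_mul hs ht
  linarith [csInf_le (hbdd s hs) (mem_image_of_mem (F · s) hi)]

theorem LipschitzOnWith.sSup_image {ι α : Type*} [PseudoMetricSpace α] {F : ι → α → ℝ}
    {I : Set ι} {S : Set α} {L : NNReal} (hI : I.Nonempty)
    (hbdd : ∀ t ∈ S, BddAbove ((F · t) '' I)) (hF : ∀ i ∈ I, LipschitzOnWith L (F i) S) :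
    LipschitzOnWith L (fun t => sSup ((F · t) '' I)) S := by
  refine LipschitzOnWith.of_le_add_mul L fun s hs t ht => ?_
  refine csSup_le (hI.image _) ?_
  rintro _ ⟨i, hi, rfl⟩
  have := (hF i hi).le_add_mul hs ht
  linarith [le_csSup (hbdd t ht) (mem_image_of_mem (F · t) hi)]

theorem exists_lipschitzOnWith_of_continuousOn_deriv {f f' : ℝ → ℝ → ℝ} {K S : Set ℝ}
    (hK : IsCompact K) (hS : IsCompact S) (hSc : Convex ℝ S)
    (hf : ∀ x ∈ K, ∀ t ∈ S, HasDerivWithinAt (f x) (f' x t) S t)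
    (hf' : ContinuousOn (fun p : ℝ × ℝ => f' p.1 p.2) (K ×ˢ S)) :
    ∃ L : NNReal, ∀ x ∈ K, LipschitzOnWith L (f x) S := by
  obtain ⟨C, hC⟩ := (hK.prod hS).exists_bound_of_continuousOn hf'
  refine ⟨C.toNNReal, fun x hx => hSc.lipschitzOnWith_of_nnnorm_hasDerivWithin_le (hf x hx) ?_⟩
  intro t ht
  rw [← NNReal.coe_le_coe, coe_nnnorm, Real.coe_toNNReal']
  exact (hC (x, t) ⟨hx, ht⟩).trans (le_max_left _ _)

theorem ae_differentiableAt_of_lipschitzOnWith_Icc {m : ℝ → ℝ} {a T : ℝ}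
    (hm : ∀ b < T, ∃ L : NNReal, LipschitzOnWith L m (Icc a b)) :
    ∀ᵐ t, t ∈ Ioo a T → DifferentiableAt ℝ m t := by
  have hae : ∀ n : ℕ, ∀ᵐ t, t ∈ Ioo a (T - 1 / (n + 1)) → DifferentiableAt ℝ m t := by
    intro n
    obtain ⟨L, hL⟩ := hm (T - 1 / (n + 1)) (by linarith [Nat.one_div_pos_of_nat (α := ℝ) (n := n)])
    filter_upwards [(hL.mono Ioo_subset_Icc_self).ae_differentiableWithinAt_of_mem] with t ht hmem
    exact (ht hmem).differentiableAt (isOpen_Ioo.mem_nhds hmem)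
  filter_upwards [ae_all_iff.2 hae] with t ht hmem
  obtain ⟨n, hn⟩ := exists_nat_one_div_lt (sub_pos.2 hmem.2)
  exact ht n ⟨hmem.1, by linarith⟩

theorem HasDerivAt.eq_of_eventuallyLE_of_eq {f g : ℝ → ℝ} {f' g' t : ℝ}
    (hf : HasDerivAt f f' t) (hg : HasDerivAt g g' t) (hle : g ≤ᶠ[𝓝 t] f) (heq : f t = g t) :
    f' = g' := by
  have hmin : IsLocalMin (f - g) t := by
    filter_upwards [hle] with s hs
    simpa [heq] using hs
  exact sub_eq_zero.1 (hmin.hasDerivAt_eq_zero (hf.sub hg))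

theorem Function.Periodic.isLeast_sInf_image_Icc {g : ℝ → ℝ} {c : ℝ} (hg : Continuous g)
    (hper : Periodic g c) (hc : 0 < c) : IsLeast (range g) (sInf (g '' Icc 0 c)) := by
  have hrange : g '' Icc 0 c = range g := by simpa using hper.image_Icc hc 0
  rw [← hrange]
  exact (isCompact_Icc.image hg).isLeast_sInf ((nonempty_Icc.2 hc.le).image g)

theorem Function.Periodic.isGreatest_sSup_image_Icc {g : ℝ → ℝ} {c : ℝ} (hg : Continuous g)
    (hper : Periodic g c) (hc : 0 < c) : IsGreatest (range g) (sSup (g '' Icc 0 c)) := by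
  have hrange : g '' Icc 0 c = range g := by simpa using hper.image_Icc hc 0
  rw [← hrange]
  exact (isCompact_Icc.image hg).isGreatest_sSup ((nonempty_Icc.2 hc.le).image g)

theorem ContinuousOn.continuous_slice {f : ℝ → ℝ → ℝ} {S : Set ℝ}
    (hf : ContinuousOn (fun p : ℝ × ℝ => f p.1 p.2) (univ ×ˢ S)) {t : ℝ} (ht : t ∈ S) :
    Continuous (f · t) :=
  continuousOn_univ.1 (hf.comp (Continuous.prodMk_left t).continuousOn fun _ _ => ⟨trivial, ht⟩)

structure HasContinuousPartials (T : ℝ) (f fx ft : ℝ → ℝ → ℝ) : Prop where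
  hasDerivAt_fst : ∀ x : ℝ, ∀ t ∈ Ico (0 : ℝ) T, HasDerivAt (fun x' => f x' t) (fx x t) x
  hasDerivWithinAt_snd : ∀ x : ℝ, ∀ t ∈ Ico (0 : ℝ) T,
    HasDerivWithinAt (fun t' => f x t') (ft x t) (Ico 0 T) t
  continuousOn_fst : ContinuousOn (fun p : ℝ × ℝ => fx p.1 p.2) (univ ×ˢ Ico 0 T)
  continuousOn_snd : ContinuousOn (fun p : ℝ × ℝ => ft p.1 p.2) (univ ×ˢ Ico 0 T)

namespace HasContinuousPartials

variable {T : ℝ} {f fx ft : ℝ → ℝ → ℝ}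

theorem continuous_slice (h : HasContinuousPartials T f fx ft) {t : ℝ} (ht : t ∈ Ico 0 T) :
    Continuous (f · t) :=
  continuous_iff_continuousAt.2 fun x => (h.hasDerivAt_fst x t ht).continuousAt

theorem exists_lipschitzOnWith_sInf_sSup (h : HasContinuousPartials T f fx ft) {K : Set ℝ}
    (hK : IsCompact K) (hKne : K.Nonempty) {b : ℝ} (hb : b < T) :
    ∃ L : NNReal, LipschitzOnWith L (fun t => sInf ((f · t) '' K)) (Icc 0 b) ∧
      LipschitzOnWith L (fun t => sSup ((f · t) '' K)) (Icc 0 b) := by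
  have hsub : Icc 0 b ⊆ Ico 0 T := Icc_subset_Ico_right hb
  obtain ⟨L, hL⟩ := exists_lipschitzOnWith_of_continuousOn_deriv hK isCompact_Icc (convex_Icc 0 b)
    (fun x _ t ht => (h.hasDerivWithinAt_snd x t (hsub ht)).mono hsub)
    (h.continuousOn_snd.mono (prod_mono (subset_univ K) hsub))
  have hcpt : ∀ t ∈ Icc 0 b, IsCompact ((f · t) '' K) :=
    fun t ht => hK.image (h.continuous_slice (hsub ht))
  exact ⟨L, .sInf_image hKne (fun t ht => (hcpt t ht).bddBelow) hL,
    .sSup_image hKne (fun t ht => (hcpt t ht).bddAbove) hL⟩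

end HasContinuousPartials

namespace IsClassicalFWSolution

variable {T : ℝ} {u ux ut uxx utx : ℝ → ℝ → ℝ}

theorem continuous_ux (hu : IsClassicalFWSolution T u ux ut) {t : ℝ} (ht : t ∈ Ico 0 T) :
    Continuous (ux · t) :=
  hu.2.2.2.2.1.continuous_slice ht

theorem periodic_ux (hu : IsClassicalFWSolution T u ux ut) {t : ℝ} (ht : t ∈ Ico 0 T) :
    Periodic (ux · t) 1 := by
  intro x
  have h := (hu.2.2.1 (x + 1) t ht).comp_add_const x 1
  rw [show (fun y => u (y + 1) t) = (u · t) from funext fun y => hu.2.1 y t ht] at h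
  exact h.unique (hu.2.2.1 x t ht)

theorem hasDerivAt_ut (hu : IsClassicalFWSolution T u ux ut)
    (hux : HasContinuousPartials T ux uxx utx) {t : ℝ} (ht : t ∈ Ico 0 T) (x : ℝ) :
    HasDerivAt (ut · t) ((∫ y in (0 : ℝ)..1, FWKernelDeriv y * ux (x - y) t) -
      3 / 2 * (ux x t ^ 2 + u x t * uxx x t)) x := by
  have hcx := hu.continuous_ux ht
  have hcxx := hux.continuousOn_fst.continuous_slice ht
  have hconv := hasDerivAt_intervalIntegral_of_continuous_partial (a := 0) (b := 1) (x₀ := x)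
    (F := fun x y => FWKernel y * ux (x - y) t) (F' := fun x y => FWKernel y * uxx (x - y) t)
    (fun x => continuous_FWKernel.mul (hcx.comp (continuous_const.sub continuous_id)))
    ((continuous_FWKernel.comp continuous_snd).mul (hcxx.comp (continuous_fst.sub continuous_snd)))
    (fun x y => ((hux.hasDerivAt_fst (x - y) t ht).comp_sub_const x y).const_mul _)
  rw [intervalIntegral_mul_deriv_comp_sub_of_periodic hasDerivAt_FWKernel
    continuous_FWKernelDeriv (fun x => hux.hasDerivAt_fst x t ht) hcxx (hu.periodic_ux ht)
    FWKernel_zero_eq_one] at hconv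
  have hut : (ut · t) = fun x => (∫ y in (0 : ℝ)..1, FWKernel y * ux (x - y) t) -
      3 / 2 * (u x t * ux x t) := funext fun x => by linarith [hu.2.2.2.2.2.2 x t ht]
  rw [hut]
  have hprod := ((hu.2.2.1 x t ht).mul (hux.hasDerivAt_fst x t ht)).const_mul (3 / 2)
  exact (hconv.sub hprod).congr_deriv (by ring)

theorem utx_eq (hu : IsClassicalFWSolution T u ux ut) (hux : HasContinuousPartials T ux uxx utx)
    {t : ℝ} (ht : t ∈ Ioo 0 T) (x : ℝ) :
    utx x t = (∫ y in (0 : ℝ)..1, FWKernelDeriv y * ux (x - y) t) -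
      3 / 2 * (ux x t ^ 2 + u x t * uxx x t) := by
  have hnhds : Ico 0 T ∈ 𝓝 t := Ico_mem_nhds ht.1 ht.2
  have hnear : ∀ᶠ p : ℝ × ℝ in 𝓝 (x, t), p.2 ∈ Ioo 0 T :=
    continuous_snd.continuousAt.preimage_mem_nhds (isOpen_Ioo.mem_nhds ht)
  refine (eq_mixed_partial_of_continuousAt (f := u) (fx := ux) (ft := (ut · t)) ?_ ?_
    (hux.continuousOn_snd.continuousAt (prod_mem_nhds univ_mem hnhds))
    (fun x => (hu.2.2.2.1 x t (Ioo_subset_Ico_self ht)).hasDerivAt hnhds)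
    (hu.hasDerivAt_ut hux (Ioo_subset_Ico_self ht) x)).symm
  · filter_upwards [hnear] with p hp using hu.2.2.1 p.1 p.2 (Ioo_subset_Ico_self hp)
  · filter_upwards [hnear] with p hp
    exact (hux.hasDerivWithinAt_snd p.1 p.2 (Ioo_subset_Ico_self hp)).hasDerivAt
      (Ico_mem_nhds hp.1 hp.2)

theorem utx_le_of_uxx_eq_zero (hu : IsClassicalFWSolution T u ux ut)
    (hux : HasContinuousPartials T ux uxx utx) {t ξ lo hi : ℝ} (ht : t ∈ Ioo 0 T)
    (hcrit : uxx ξ t = 0) (hlo : ∀ x, lo ≤ ux x t) (hhi : ∀ x, ux x t ≤ hi) :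
    utx ξ t ≤ -(3 / 2) * ux ξ t ^ 2 + (hi - lo) / 2 := by
  have hint := integral_FWKernelDeriv_mul_le (v := fun y => ux (ξ - y) t)
    ((hu.continuous_ux (Ioo_subset_Ico_self ht)).comp (continuous_const.sub continuous_id))
    (fun y => hlo (ξ - y)) (fun y => hhi (ξ - y))
  rw [hu.utx_eq hux ht, hcrit]
  linarith

theorem deriv_le_of_isLeast (hu : IsClassicalFWSolution T u ux ut)
    (hux : HasContinuousPartials T ux uxx utx) {m : ℝ → ℝ} {t M d : ℝ} (ht : t ∈ Ioo 0 T)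
    (hmin : ∀ s ∈ Ico 0 T, IsLeast (range (ux · s)) (m s))
    (hmax : IsGreatest (range (ux · t)) M) (hd : HasDerivAt m d t) :
    d ≤ -(3 / 2) * m t ^ 2 + (M - m t) / 2 := by
  have ht' := Ioo_subset_Ico_self ht
  obtain ⟨⟨ξ, hξ : ux ξ t = m t⟩, hlo⟩ := hmin t ht'
  have hlo' : ∀ x, ux ξ t ≤ ux x t := fun x => hξ ▸ hlo (mem_range_self x)
  have hcrit : uxx ξ t = 0 :=
    IsLocalMin.hasDerivAt_eq_zero (Eventually.of_forall hlo') (hux.hasDerivAt_fst ξ t ht')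
  have hnhds : Ico 0 T ∈ 𝓝 t := Ico_mem_nhds ht.1 ht.2
  have hd_eq : utx ξ t = d := ((hux.hasDerivWithinAt_snd ξ t ht').hasDerivAt hnhds)
    |>.eq_of_eventuallyLE_of_eq hd (mem_of_superset hnhds fun s hs => (hmin s hs).2 ⟨ξ, rfl⟩) hξ
  rw [← hd_eq, ← hξ]
  exact hu.utx_le_of_uxx_eq_zero hux ht hcrit hlo' fun x => hmax.2 (mem_range_self x)

theorem deriv_le_of_isGreatest (hu : IsClassicalFWSolution T u ux ut)
    (hux : HasContinuousPartials T ux uxx utx) {m : ℝ → ℝ} {t M d : ℝ} (ht : t ∈ Ioo 0 T)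
    (hmax : ∀ s ∈ Ico 0 T, IsGreatest (range (ux · s)) (m s))
    (hmin : IsLeast (range (ux · t)) M) (hd : HasDerivAt m d t) :
    d ≤ -(3 / 2) * m t ^ 2 + (m t - M) / 2 := by
  have ht' := Ioo_subset_Ico_self ht
  obtain ⟨⟨η, hη : ux η t = m t⟩, hhi⟩ := hmax t ht'
  have hhi' : ∀ x, ux x t ≤ ux η t := fun x => hη ▸ hhi (mem_range_self x)
  have hcrit : uxx η t = 0 :=
    IsLocalMax.hasDerivAt_eq_zero (Eventually.of_forall hhi') (hux.hasDerivAt_fst η t ht')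
  have hnhds : Ico 0 T ∈ 𝓝 t := Ico_mem_nhds ht.1 ht.2
  have hd_eq : d = utx η t := hd.eq_of_eventuallyLE_of_eq
    ((hux.hasDerivWithinAt_snd η t ht').hasDerivAt hnhds)
    (mem_of_superset hnhds fun s hs => (hmax s hs).2 ⟨η, rfl⟩) hη.symm
  rw [hd_eq, ← hη]
  exact hu.utx_le_of_uxx_eq_zero hux ht hcrit (fun x => hmin.2 (mem_range_self x)) hhi'

end IsClassicalFWSolution

theorem fw_extrema_differential_inequalities_general (T : ℝ)
    (u ux ut uxx utx : ℝ → ℝ → ℝ)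
    (hu : IsClassicalFWSolution T u ux ut)
    (huxx : ∀ x : ℝ, ∀ t ∈ Set.Ico (0 : ℝ) T,
      HasDerivAt (fun x' => ux x' t) (uxx x t) x)
    (hutx : ∀ x : ℝ, ∀ t ∈ Set.Ico (0 : ℝ) T,
      HasDerivWithinAt (fun t' => ux x t') (utx x t) (Set.Ico 0 T) t)
    (huxxc : ContinuousOn (fun p : ℝ × ℝ => uxx p.1 p.2) (Set.univ ×ˢ Set.Ico 0 T))
    (hutxc : ContinuousOn (fun p : ℝ × ℝ => utx p.1 p.2) (Set.univ ×ˢ Set.Ico 0 T))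
    (m₁ m₂ : ℝ → ℝ)
    (hm₁ : ∀ t : ℝ, m₁ t = sInf ((fun x => ux x t) '' Set.Icc (0 : ℝ) 1))
    (hm₂ : ∀ t : ℝ, m₂ t = sSup ((fun x => ux x t) '' Set.Icc (0 : ℝ) 1)) :
    (∀ b : ℝ, b < T → ∃ L : NNReal, LipschitzOnWith L m₁ (Set.Icc 0 b)) ∧
    (∀ b : ℝ, b < T → ∃ L : NNReal, LipschitzOnWith L m₂ (Set.Icc 0 b)) ∧
    (∀ᵐ t ∂(volume : Measure ℝ), t ∈ Set.Ioo (0 : ℝ) T →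
      ∃ d₁ d₂ : ℝ, HasDerivAt m₁ d₁ t ∧ HasDerivAt m₂ d₂ t ∧
        d₁ ≤ -(3 / 2) * (m₁ t) ^ 2 + (m₂ t - m₁ t) / 2 ∧
        d₂ ≤ -(3 / 2) * (m₂ t) ^ 2 + (m₂ t - m₁ t) / 2) := by
  have hux : HasContinuousPartials T ux uxx utx := ⟨huxx, hutx, huxxc, hutxc⟩
  have hmin : ∀ t ∈ Ico 0 T, IsLeast (range (ux · t)) (m₁ t) := fun t ht =>
    hm₁ t ▸ (hu.periodic_ux ht).isLeast_sInf_image_Icc (hu.continuous_ux ht) one_pos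
  have hmax : ∀ t ∈ Ico 0 T, IsGreatest (range (ux · t)) (m₂ t) := fun t ht =>
    hm₂ t ▸ (hu.periodic_ux ht).isGreatest_sSup_image_Icc (hu.continuous_ux ht) one_pos
  have hlip : ∀ b < T, ∃ L : NNReal,
      LipschitzOnWith L m₁ (Icc 0 b) ∧ LipschitzOnWith L m₂ (Icc 0 b) := by
    rw [funext hm₁, funext hm₂]
    exact fun b => hux.exists_lipschitzOnWith_sInf_sSup isCompact_Icc (nonempty_Icc.2 zero_le_one)
  have hlip₁ : ∀ b < T, ∃ L : NNReal, LipschitzOnWith L m₁ (Icc 0 b) :=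
    fun b hb => (hlip b hb).imp fun _ => And.left
  have hlip₂ : ∀ b < T, ∃ L : NNReal, LipschitzOnWith L m₂ (Icc 0 b) :=
    fun b hb => (hlip b hb).imp fun _ => And.right
  refine ⟨hlip₁, hlip₂, ?_⟩
  filter_upwards [ae_differentiableAt_of_lipschitzOnWith_Icc hlip₁,
    ae_differentiableAt_of_lipschitzOnWith_Icc hlip₂] with t hd₁ hd₂ ht
  have ht' := Ioo_subset_Ico_self ht
  exact ⟨_, _, (hd₁ ht).hasDerivAt, (hd₂ ht).hasDerivAt,
    hu.deriv_le_of_isLeast hux ht hmin (hmax t ht') (hd₁ ht).hasDerivAt,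
    hu.deriv_le_of_isGreatest hux ht hmax (hmin t ht') (hd₂ ht).hasDerivAt⟩

/-- For a classical periodic Fornberg–Whitham solution with continuous `∂ₓ²u` and
`∂ₜ∂ₓu`, the extrema `m₁(t) = min ∂ₓu(·,t)` and `m₂(t) = max ∂ₓu(·,t)` are locally
Lipschitz and satisfy, almost everywhere,
`m₁' ≤ -(3/2)m₁² + (m₂ - m₁)/2` and `m₂' ≤ -(3/2)m₂² + (m₂ - m₁)/2`. -/
theorem fw_extrema_differential_inequalities (T : ℝ) (hT : 0 < T)
    (u ux ut uxx utx : ℝ → ℝ → ℝ)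
    (hu : IsClassicalFWSolution T u ux ut)
    (huxx : ∀ x : ℝ, ∀ t ∈ Set.Ico (0 : ℝ) T,
      HasDerivAt (fun x' => ux x' t) (uxx x t) x)
    (hutx : ∀ x : ℝ, ∀ t ∈ Set.Ico (0 : ℝ) T,
      HasDerivWithinAt (fun t' => ux x t') (utx x t) (Set.Ico 0 T) t)
    (huxxc : ContinuousOn (fun p : ℝ × ℝ => uxx p.1 p.2) (Set.univ ×ˢ Set.Ico 0 T))
    (hutxc : ContinuousOn (fun p : ℝ × ℝ => utx p.1 p.2) (Set.univ ×ˢ Set.Ico 0 T))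
    (m₁ m₂ : ℝ → ℝ)
    (hm₁ : ∀ t : ℝ, m₁ t = sInf ((fun x => ux x t) '' Set.Icc (0 : ℝ) 1))
    (hm₂ : ∀ t : ℝ, m₂ t = sSup ((fun x => ux x t) '' Set.Icc (0 : ℝ) 1)) :
    (∀ b : ℝ, b < T → ∃ L : NNReal, LipschitzOnWith L m₁ (Set.Icc 0 b)) ∧
    (∀ b : ℝ, b < T → ∃ L : NNReal, LipschitzOnWith L m₂ (Set.Icc 0 b)) ∧
    (∀ᵐ t ∂(volume : Measure ℝ), t ∈ Set.Ioo (0 : ℝ) T →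
      ∃ d₁ d₂ : ℝ, HasDerivAt m₁ d₁ t ∧ HasDerivAt m₂ d₂ t ∧
        d₁ ≤ -(3 / 2) * (m₁ t) ^ 2 + (m₂ t - m₁ t) / 2 ∧
        d₂ ≤ -(3 / 2) * (m₂ t) ^ 2 + (m₂ t - m₁ t) / 2) :=
  fw_extrema_differential_inequalities_general T u ux ut uxx utx hu huxx hutx huxxc hutxc m₁ m₂ hm₁
    hm₂
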